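/- arXiv:math/0411407 — 8 statements merged into one kernel-verified Lean document; each statement's English description precedes it below -/
import Mathlib

section
/- A subset P of [2, n-1] is the peak set of some permutation of {1,...,n} if and only if P contains no two consecutive integers (i.e., i in P implies i-1 not in P, and 1 is not in P). -/
/-- The value of a permutation of `{1,…,n}` at position `i` (1-based), extended
by `0` outside `[1,n]`. -/
def permVal (n : ℕ) (σ : Equiv.Perm (Fin n)) (i : ℕ) : ℕ :=
  if h : 1 ≤ i ∧ i ≤ n then ((σ ⟨i - 1, by omega⟩ : Fin n) : ℕ) + 1 else 0

namespace PeakAux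

/-- The value (0-based) placed at 1-based position `p`: peak positions get the
largest values in order, non-peak positions the smallest values in order. -/
def pk (n : ℕ) (P : Finset ℕ) (p : ℕ) : ℕ :=
  if p ∈ P then (n - P.card) + (P.filter (· < p)).card
  else ((Finset.Icc 1 n).filter (fun j => j ∉ P ∧ j < p)).card

variable {n : ℕ} {P : Finset ℕ}

lemma card_nonpeaks (hP : P ⊆ Finset.Icc 1 n) :
    ((Finset.Icc 1 n).filter (fun j => j ∉ P)).card = n - P.card := by
  have h : (Finset.Icc 1 n).filter (fun j => j ∉ P) = Finset.Icc 1 n \ P := by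
    ext j; simp [Finset.mem_sdiff, Finset.mem_filter]
  rw [h, Finset.card_sdiff_of_subset hP, Nat.card_Icc]
  omega

lemma pk_nonpeak_lt (hP : P ⊆ Finset.Icc 1 n) {p : ℕ}
    (hp : p ∉ P) (h1 : 1 ≤ p) (h2 : p ≤ n) :
    pk n P p < n - P.card := by
  have hpN : p ∈ (Finset.Icc 1 n).filter (fun j => j ∉ P) := by
    simp [Finset.mem_Icc, hp, h1, h2]
  have hsub : (Finset.Icc 1 n).filter (fun j => j ∉ P ∧ j < p)
      ⊆ ((Finset.Icc 1 n).filter (fun j => j ∉ P)).erase p := by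
    intro j hj
    simp only [Finset.mem_filter, Finset.mem_erase] at hj ⊢
    exact ⟨by omega, hj.1, hj.2.1⟩
  have h3 := Finset.card_le_card hsub
  have h4 := Finset.card_erase_of_mem hpN
  have h5 : 1 ≤ ((Finset.Icc 1 n).filter (fun j => j ∉ P)).card :=
    Finset.card_pos.mpr ⟨p, hpN⟩
  have hc := card_nonpeaks hP
  simp only [pk, if_neg hp]
  omega

lemma pk_peak_bounds (hP : P ⊆ Finset.Icc 1 n) {p : ℕ} (hp : p ∈ P) :
    n - P.card ≤ pk n P p ∧ pk n P p < n := by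
  have hk : P.card ≤ n := by
    have := Finset.card_le_card hP
    rw [Nat.card_Icc] at this; omega
  have hk1 : 1 ≤ P.card := Finset.card_pos.mpr ⟨p, hp⟩
  have hsub : P.filter (· < p) ⊆ P.erase p := by
    intro j hj; simp only [Finset.mem_filter, Finset.mem_erase] at hj ⊢
    exact ⟨by omega, hj.1⟩
  have h3 := Finset.card_le_card hsub
  have h4 := Finset.card_erase_of_mem hp
  simp only [pk, if_pos hp]
  omega

lemma pk_lt_pk_nonpeak {p q : ℕ} (hp : p ∉ P) (hq : q ∉ P)
    (h1 : 1 ≤ p) (h2 : p ≤ n) (hpq : p < q) :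
    pk n P p < pk n P q := by
  simp only [pk, if_neg hp, if_neg hq]
  have hmem : p ∉ (Finset.Icc 1 n).filter (fun j => j ∉ P ∧ j < p) := by simp
  have hsub : insert p ((Finset.Icc 1 n).filter (fun j => j ∉ P ∧ j < p))
      ⊆ (Finset.Icc 1 n).filter (fun j => j ∉ P ∧ j < q) := by
    intro j hj
    simp only [Finset.mem_insert, Finset.mem_filter, Finset.mem_Icc] at hj ⊢
    rcases hj with rfl | hj
    · exact ⟨⟨h1, h2⟩, hp, hpq⟩
    · exact ⟨hj.1, hj.2.1, by omega⟩
  have hcard := Finset.card_le_card hsub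
  rw [Finset.card_insert_of_notMem hmem] at hcard
  omega

lemma pk_lt_pk_peak {p q : ℕ} (hp : p ∈ P) (hq : q ∈ P) (hpq : p < q) :
    pk n P p < pk n P q := by
  simp only [pk, if_pos hp, if_pos hq]
  have hmem : p ∉ P.filter (· < p) := by simp
  have hsub : insert p (P.filter (· < p)) ⊆ P.filter (· < q) := by
    intro j hj
    simp only [Finset.mem_insert, Finset.mem_filter] at hj ⊢
    rcases hj with rfl | hj
    · exact ⟨hp, hpq⟩
    · exact ⟨hj.1, by omega⟩
  have hcard := Finset.card_le_card hsub
  rw [Finset.card_insert_of_notMem hmem] at hcard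
  omega

end PeakAux

open PeakAux in
/-- A subset `P ⊆ [2, n-1]` is the peak set of some permutation of `{1,…,n}`
if and only if `1 ∉ P` and `P` contains no two consecutive integers. -/
theorem peak_set_characterization (n : ℕ) (P : Finset ℕ)
    (hP : P ⊆ Finset.Icc 2 (n - 1)) :
    (∃ σ : Equiv.Perm (Fin n),
        P = (Finset.Icc 2 (n - 1)).filter
          (fun i => permVal n σ (i - 1) < permVal n σ i ∧
            permVal n σ (i + 1) < permVal n σ i))
      ↔ (1 ∉ P ∧ ∀ i ∈ P, i - 1 ∉ P) := by
  have hP1n : P ⊆ Finset.Icc 1 n := by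
    intro x hx
    have hx' := Finset.mem_Icc.mp (hP hx)
    simp only [Finset.mem_Icc]; omega
  constructor
  · rintro ⟨σ, rfl⟩
    constructor
    · intro h
      have := Finset.mem_Icc.mp (hP h); omega
    · intro i hi hi'
      have h2i : 2 ≤ i := (Finset.mem_Icc.mp (hP hi)).1
      rw [Finset.mem_filter] at hi hi'
      have ha := hi.2.1
      have h' := hi'.2.2
      rw [Nat.sub_add_cancel (by omega)] at h'
      omega
  · rintro ⟨-, hcons⟩
    have hbound : ∀ x : Fin n, pk n P (x.val + 1) < n := by
      intro x
      by_cases hx : x.val + 1 ∈ P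
      · exact (pk_peak_bounds hP1n hx).2
      · have := pk_nonpeak_lt hP1n hx (by omega) (by omega)
        omega
    set F : Fin n → Fin n := fun x => ⟨pk n P (x.val + 1), hbound x⟩ with hF
    have hinj : Function.Injective F := by
      intro x y hxy
      have hxy' : pk n P (x.val + 1) = pk n P (y.val + 1) := congrArg Fin.val hxy
      by_contra hne
      have hne' : x.val + 1 ≠ y.val + 1 := fun h => hne (Fin.ext (by omega))
      by_cases hx : x.val + 1 ∈ P <;> by_cases hy : y.val + 1 ∈ P
      · rcases Nat.lt_or_ge (x.val + 1) (y.val + 1) with h | h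
        · exact absurd hxy' (Nat.ne_of_lt (pk_lt_pk_peak hx hy h))
        · exact absurd hxy'.symm (Nat.ne_of_lt (pk_lt_pk_peak hy hx (by omega)))
      · have h1 := (pk_peak_bounds hP1n hx).1
        have h2 := pk_nonpeak_lt hP1n hy (by omega) (by omega)
        omega
      · have h1 := (pk_peak_bounds hP1n hy).1
        have h2 := pk_nonpeak_lt hP1n hx (by omega) (by omega)
        omega
      · rcases Nat.lt_or_ge (x.val + 1) (y.val + 1) with h | h
        · exact absurd hxy'
            (Nat.ne_of_lt (pk_lt_pk_nonpeak hx hy (by omega) (by omega) h))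
        · exact absurd hxy'.symm
            (Nat.ne_of_lt (pk_lt_pk_nonpeak hy hx (by omega) (by omega) (by omega)))
    let σ : Equiv.Perm (Fin n) := Equiv.ofBijective F (Finite.injective_iff_bijective.mp hinj)
    have hval : ∀ i, 1 ≤ i → i ≤ n → permVal n σ i = pk n P i + 1 := by
      intro i h1 h2
      simp only [permVal, dif_pos (⟨h1, h2⟩ : 1 ≤ i ∧ i ≤ n)]
      have hσ : σ ⟨i - 1, by omega⟩ = F ⟨i - 1, by omega⟩ := rfl
      rw [hσ]
      show pk n P (i - 1 + 1) + 1 = pk n P i + 1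
      rw [Nat.sub_add_cancel h1]
    refine ⟨σ, ?_⟩
    ext i
    simp only [Finset.mem_filter, Finset.mem_Icc]
    constructor
    · intro hi
      have hiIcc := Finset.mem_Icc.mp (hP hi)
      have h2i := hiIcc.1
      have hin := hiIcc.2
      have hn3 : 3 ≤ n := by omega
      have hm1 : i - 1 ∉ P := hcons i hi
      have hp1 : i + 1 ∉ P := by
        intro h
        have := hcons (i + 1) h
        simp only [Nat.add_sub_cancel] at this
        exact this hi
      refine ⟨⟨h2i, hin⟩, ?_, ?_⟩
      · rw [hval (i - 1) (by omega) (by omega), hval i (by omega) (by omega)]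
        have ha := pk_nonpeak_lt hP1n hm1 (by omega) (by omega)
        have hb := (pk_peak_bounds hP1n hi).1
        omega
      · rw [hval (i + 1) (by omega) (by omega), hval i (by omega) (by omega)]
        have ha := pk_nonpeak_lt hP1n hp1 (by omega) (by omega)
        have hb := (pk_peak_bounds hP1n hi).1
        omega
    · rintro ⟨⟨h2i, hin⟩, hlt1, hlt2⟩
      by_contra hiP
      have hn3 : 3 ≤ n := by omega
      rw [hval (i + 1) (by omega) (by omega), hval i (by omega) (by omega)] at hlt2
      by_cases h1 : i + 1 ∈ P
      · have ha := (pk_peak_bounds hP1n h1).1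
        have hb := pk_nonpeak_lt hP1n hiP (by omega) (by omega)
        omega
      · have := pk_lt_pk_nonpeak (n := n) hiP h1 (by omega) (by omega) (Nat.lt_succ_self i)
        omega
end

section
/- For n >= 2, the number c(n,1) of occurrences of the part 1 among all compositions of n equals (n+2)*2^{n-3}, and c(1,1) = 1. -/
/-- `c n i` is the total number of occurrences of the integer `i` as a part,
summed over all compositions of `n`. -/
def partCount (n i : ℕ) : ℕ := ∑ K : Composition n, K.blocks.count i



/-- Lists of positive integers summing to `n`. -/
def T : ℕ → Finset (List ℕ)
  | 0 => {[]}
  | (n+1) => (Finset.range (n+1)).attach.biUnion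
      (fun j => (T j.1).image (fun l => (n+1-j.1) :: l))
  decreasing_by exact Finset.mem_range.1 j.2

lemma T_succ (n : ℕ) : T (n+1) = (Finset.range (n+1)).attach.biUnion
    (fun j => (T j.1).image (fun l => (n+1-j.1) :: l)) := by rw [T]

lemma cons_inj (k : ℕ) : Function.Injective (fun l : List ℕ => k :: l) :=
  fun a b h => (List.cons_eq_cons.mp h).2

lemma mem_T : ∀ n, ∀ l : List ℕ, l ∈ T n ↔ (∀ x ∈ l, 0 < x) ∧ l.sum = n := by
  intro n
  induction n using Nat.strong_induction_on with
  | _ n ih =>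
    intro l
    match n with
    | 0 =>
      rw [show T 0 = {[]} from by rw [T]]
      simp only [Finset.mem_singleton]
      constructor
      · rintro rfl; simp
      · rintro ⟨hpos, hsum⟩
        cases l with
        | nil => rfl
        | cons a t =>
          exfalso
          have := hpos a (by simp)
          simp [List.sum_cons] at hsum
          omega
    | (n+1) =>
      rw [T_succ]
      simp only [Finset.mem_biUnion, Finset.mem_attach, Finset.mem_image, true_and]
      constructor
      · rintro ⟨j, t, ht, rfl⟩
        obtain ⟨j, hj⟩ := j
        simp only [Finset.mem_range] at hj
        dsimp only at ht ⊢
        rw [ih j hj] at ht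
        obtain ⟨hpos, hsum⟩ := ht
        refine ⟨?_, ?_⟩
        · intro x hx
          rcases List.mem_cons.1 hx with rfl | hx
          · omega
          · exact hpos x hx
        · simp only [List.sum_cons, hsum]; omega
      · rintro ⟨hpos, hsum⟩
        cases l with
        | nil => simp at hsum
        | cons k t =>
          have hk : 0 < k := hpos k (by simp)
          have hts : t.sum = n + 1 - k := by simp [List.sum_cons] at hsum; omega
          have hkle : k ≤ n + 1 := by simp [List.sum_cons] at hsum; omega
          refine ⟨⟨n + 1 - k, Finset.mem_range.2 (by omega)⟩, t, ?_, ?_⟩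
          · rw [ih (n+1-k) (by omega)]
            exact ⟨fun x hx => hpos x (List.mem_cons_of_mem _ hx), by omega⟩
          · simp only []; congr 1; omega

def aT (n : ℕ) : ℕ := (T n).card
def cT (n : ℕ) : ℕ := ∑ l ∈ T n, l.count 1

lemma hdisj (n : ℕ) : Set.PairwiseDisjoint ↑(Finset.range (n+1)).attach
    (fun j : {x // x ∈ Finset.range (n+1)} =>
      (T j.1).image (fun l => (n+1-j.1) :: l)) := by
  rintro j _ j' _ hne
  have hj := Finset.mem_range.1 j.2
  have hj' := Finset.mem_range.1 j'.2
  apply Finset.disjoint_left.2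
  rintro l hl hl'
  simp only [Finset.mem_image] at hl hl'
  obtain ⟨t, _, rfl⟩ := hl
  obtain ⟨t', _, heq⟩ := hl'
  have h1 := (List.cons_eq_cons.mp heq).1
  exact hne (Subtype.ext (by omega : j.1 = j'.1))

lemma aT_succ (n : ℕ) : aT (n+1) = ∑ j ∈ Finset.range (n+1), aT j := by
  unfold aT
  rw [T_succ, Finset.card_biUnion (hdisj n)]
  rw [← Finset.sum_attach (Finset.range (n+1)) (fun j => (T j).card)]
  refine Finset.sum_congr rfl fun j _ => ?_
  rw [Finset.card_image_of_injective _ (cons_inj _)]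

lemma cT_succ (n : ℕ) : cT (n+1) = (∑ j ∈ Finset.range (n+1), cT j) + aT n := by
  unfold cT
  rw [T_succ, Finset.sum_biUnion (hdisj n)]
  have key : ∀ j ∈ (Finset.range (n+1)).attach,
      (∑ l ∈ (T j.1).image (fun l => (n+1-j.1) :: l), l.count 1)
        = (∑ l ∈ T j.1, l.count 1) + (if j.1 = n then (T j.1).card else 0) := by
    rintro j _
    have hj := Finset.mem_range.1 j.2
    rw [Finset.sum_image (fun a _ b _ h => cons_inj _ h)]
    simp only [List.count_cons]
    rw [Finset.sum_add_distrib]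
    congr 1
    have hiff : ((n+1-j : ℕ) = 1) ↔ j = n := by omega
    by_cases h : j = n
    · have h1 : (n + 1 - j.1 : ℕ) = 1 := by omega
      simp [beq_iff_eq, h1, h, Finset.sum_const]
    · have : ¬ ((n+1-j : ℕ) = 1) := by omega
      simp [beq_iff_eq, this, h]
  rw [Finset.sum_congr rfl key, Finset.sum_add_distrib]
  rw [Finset.sum_attach (Finset.range (n+1)) (fun j => ∑ l ∈ T j, l.count 1)]
  rw [Finset.sum_attach (Finset.range (n+1)) (fun j => if j = n then (T j).card else 0)]
  rw [Finset.sum_ite_eq' (Finset.range (n+1)) n (fun j => (T j).card)]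
  simp [aT]

lemma aT_zero : aT 0 = 1 := by
  unfold aT; rw [show T 0 = {[]} from by rw [T]]; rfl

lemma cT_zero : cT 0 = 0 := by
  unfold cT; rw [show T 0 = {[]} from by rw [T]]; simp

lemma aT_pow : ∀ n, aT (n+1) = 2 ^ n := by
  intro n
  induction n with
  | zero => rw [aT_succ]; simp [aT_zero]
  | succ m ih =>
    rw [aT_succ, Finset.sum_range_succ, ← aT_succ, ih]
    ring

lemma cT_one : cT 1 = 1 := by
  rw [cT_succ]; simp [cT_zero, aT_zero]

lemma cT_two : cT 2 = 2 := by
  rw [cT_succ, Finset.sum_range_succ, Finset.sum_range_one, cT_zero, cT_one, aT_pow]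
  rfl

lemma cT_rec (n : ℕ) : cT (n+2) + aT n = 2 * cT (n+1) + aT (n+1) := by
  have h1 : cT (n+2) = (∑ j ∈ Finset.range (n+1), cT j) + cT (n+1) + aT (n+1) := by
    rw [cT_succ, Finset.sum_range_succ]
  have h2 : cT (n+1) = (∑ j ∈ Finset.range (n+1), cT j) + aT n := cT_succ n
  omega

lemma cT_formula : ∀ n, 8 * cT (n+2) = (n+4) * 2 ^ (n+2) := by
  intro n
  induction n with
  | zero => rw [cT_two]; rfl
  | succ m ih =>
    have hrec := cT_rec (m+1)
    rw [aT_pow, aT_pow] at hrec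
    zify at ih hrec ⊢
    linear_combination 8 * hrec + 2 * ih

lemma bridge (n : ℕ) : partCount n 1 = cT n := by
  unfold partCount cT
  refine Finset.sum_bij (fun K _ => K.blocks) ?_ ?_ ?_ ?_
  · intro K _
    exact (mem_T n K.blocks).2 ⟨fun x hx => K.blocks_pos hx, K.blocks_sum⟩
  · intro K _ K' _ h
    exact Composition.ext h
  · intro l hl
    obtain ⟨hpos, hsum⟩ := (mem_T n l).1 hl
    exact ⟨⟨l, fun {i} hi => hpos i hi, hsum⟩, Finset.mem_univ _, rfl⟩
  · intro K _
    rfl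

/-- `c(1,1) = 1` and for `n ≥ 2`, `c(n,1) = (n+2) 2^{n-3}`. -/
theorem count_ones_in_compositions :
    partCount 1 1 = 1 ∧
      ∀ n : ℕ, 2 ≤ n → (partCount n 1 : ℚ) = (n + 2) * (2 : ℚ) ^ ((n : ℤ) - 3) := by
  constructor
  · rw [bridge, cT_one]
  · intro n hn
    obtain ⟨m, rfl⟩ : ∃ m, n = m + 2 := ⟨n - 2, by omega⟩
    rw [bridge]
    have hc : (8 : ℚ) * (cT (m+2) : ℚ) = ((m:ℚ)+4) * 2 ^ (m+2) := by
      exact_mod_cast cT_formula m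
    have he : (((m+2 : ℕ) : ℤ) - 3) = (m : ℤ) - 1 := by push_cast; ring
    rw [he, zpow_sub₀ (by norm_num : (2:ℚ) ≠ 0), zpow_natCast, zpow_one]
    push_cast
    field_simp
    linear_combination hc / 4
end

section
/- For all n >= i >= 1, the number c(n,i) of occurrences of the part i among all compositions of n satisfies c(n,i) = c(n-i+1, 1). -/
theorem List.sum_set_add_getElem {M : Type*} [AddCommMonoid M] (l : List M) {j : ℕ}
    (hj : j < l.length) (x : M) : (l.set j x).sum + l[j] = l.sum + x := by
  conv_rhs => rw [← l.set_getElem_self hj]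
  simp only [List.sum_set, hj, if_true]
  abel

namespace Composition

variable {n m i x : ℕ}

open Finset in
theorem count_blocks (K : Composition n) (i : ℕ) :
    K.blocks.count i = #{j | K.blocksFun j = i} :=
  (Fin.card_filter_univ_eq_vector_get_eq_count i ⟨K.blocks, rfl⟩).symm

def setBlock (K : Composition n) (j : Fin K.length) (hx : 0 < x)
    (hsum : n + x = m + K.blocksFun j) : Composition m where
  blocks := K.blocks.set j x
  blocks_pos h := (List.mem_or_eq_of_mem_set h).elim K.blocks_pos (· ▸ hx)
  blocks_sum := by
    have := K.blocks.sum_set_add_getElem j.2 x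
    rw [K.blocks_sum] at this
    exact Nat.add_right_cancel (this.trans hsum)

theorem length_setBlock (K : Composition n) (j : Fin K.length) (hx : 0 < x)
    (hsum : n + x = m + K.blocksFun j) : (K.setBlock j hx hsum).length = K.length :=
  List.length_set

abbrev BlockOccurrence (n i : ℕ) := Σ K : Composition n, {j : Fin K.length // K.blocksFun j = i}

theorem card_blockOccurrence (n i : ℕ) : Fintype.card (BlockOccurrence n i) = partCount n i := by
  simp only [Fintype.card_sigma, Fintype.card_subtype, partCount, count_blocks]

theorem BlockOccurrence.ext {p q : BlockOccurrence n i} (hK : p.1 = q.1)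
    (hj : (p.2.1 : ℕ) = q.2.1) : p = q := by
  obtain ⟨K, j, hj'⟩ := p
  obtain ⟨K', j', hj''⟩ := q
  subst hK
  obtain rfl : j = j' := Fin.ext hj
  rfl

def BlockOccurrence.set (hx : 0 < x) (hsum : n + x = m + i) (p : BlockOccurrence n i) :
    BlockOccurrence m x :=
  ⟨p.1.setBlock p.2.1 hx (by rw [p.2.2]; exact hsum),
    ⟨Fin.cast (length_setBlock ..).symm p.2.1, List.getElem_set_self _⟩⟩

theorem BlockOccurrence.set_set (hi : 0 < i) (hx : 0 < x) (hsum : n + x = m + i)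
    (hsum' : m + i = n + x) (p : BlockOccurrence n i) :
    (p.set hx hsum).set hi hsum' = p := by
  obtain ⟨K, j, hj⟩ := p
  refine BlockOccurrence.ext (Composition.ext ?_) rfl
  change (K.blocks.set j x).set j i = K.blocks
  rw [List.set_set, ← hj]
  exact K.blocks.set_getElem_self _

def BlockOccurrence.setEquiv (hi : 0 < i) (hx : 0 < x) (hsum : n + x = m + i) :
    BlockOccurrence n i ≃ BlockOccurrence m x where
  toFun := set hx hsum
  invFun := set hi hsum.symm
  left_inv := set_set hi hx hsum hsum.symm
  right_inv := set_set hx hi hsum.symm hsum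

end Composition

theorem partCount_eq_of_add_eq {n m i x : ℕ} (hi : 0 < i) (hx : 0 < x) (hsum : n + x = m + i) :
    partCount n i = partCount m x := by
  rw [← Composition.card_blockOccurrence, ← Composition.card_blockOccurrence]
  exact Fintype.card_congr (Composition.BlockOccurrence.setEquiv hi hx hsum)

/-- For `n ≥ i ≥ 1`, `c(n,i) = c(n-i+1, 1)`. -/
theorem partCount_eq_partCount_one (n i : ℕ) (hi : 1 ≤ i) (hn : i ≤ n) :
    partCount n i = partCount (n - i + 1) 1 :=
  partCount_eq_of_add_eq hi Nat.one_pos (by omega)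
end

section
/- The generating function of c(n,i), the number of occurrences of part i over all compositions of n, is sum_{n>=0} c(n,i) x^n = x^i * (1 - 2x + x^2) / (1 - 2x)^2 (as a formal power series). -/
/-!
Splitting off the first part `j` of a composition of `n` leaves a composition of `n - j`.
For an additive statistic `∑ w(part)` with generating function `S`, and `G` the generating
function of the number of compositions, this gives `S = (x / (1 - x)) S + W G` with
`W = ∑_{j ≥ 1} w(j) xʲ`, and likewise `G = 1 + (x / (1 - x)) G`. Hence `G = (1 - x) / (1 - 2x)`
and `S = W G² = W (1 - x)² / (1 - 2x)²`; counting occurrences of `i` is the weight `W = xⁱ`.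
-/

open PowerSeries

open Finset hiding mk

namespace Composition

lemma cons_head!_tail_blocks {n : ℕ} (K : Composition (n + 1)) :
    K.blocks.head! :: K.blocks.tail = K.blocks :=
  List.cons_head!_tail (by simp [blocks_eq_nil])

lemma one_le_head!_blocks {n : ℕ} (K : Composition (n + 1)) : 1 ≤ K.blocks.head! :=
  K.one_le_blocks (by rw [← K.cons_head!_tail_blocks]; exact List.mem_cons_self)

lemma head!_add_sum_tail_blocks {n : ℕ} (K : Composition (n + 1)) :
    K.blocks.head! + K.blocks.tail.sum = n + 1 := by
  rw [← List.sum_cons, K.cons_head!_tail_blocks, K.blocks_sum]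

/-- A composition of `n + 1` is its first part `a + 1` followed by a composition of `b`,
where `a + b = n`. -/
def headTailEquiv (n : ℕ) :
    Composition (n + 1) ≃ (p : antidiagonal n) × Composition p.1.2 where
  toFun K :=
    ⟨⟨(K.blocks.head! - 1, K.blocks.tail.sum), mem_antidiagonal.2 (by
        have := K.one_le_head!_blocks; have := K.head!_add_sum_tail_blocks; dsimp only; omega)⟩,
      ⟨K.blocks.tail,
        fun h => K.blocks_pos (by rw [← K.cons_head!_tail_blocks]; exact List.mem_cons_of_mem _ h),
        rfl⟩⟩
  invFun p :=
    ⟨(p.1.1.1 + 1) :: p.2.blocks,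
      fun h => by
        rcases List.mem_cons.1 h with rfl | h
        · omega
        · exact p.2.blocks_pos h,
      by
        have := mem_antidiagonal.1 p.1.2
        rw [List.sum_cons, p.2.blocks_sum]; omega⟩
  left_inv K := by
    ext1
    change (K.blocks.head! - 1 + 1) :: K.blocks.tail = K.blocks
    rw [Nat.sub_add_cancel K.one_le_head!_blocks, K.cons_head!_tail_blocks]
  right_inv := by
    rintro ⟨⟨⟨a, b⟩, hab⟩, ⟨blocks, blocks_pos, hsum⟩⟩
    change blocks.sum = b at hsum
    subst hsum
    rfl

lemma sum_blocks_succ {M : Type*} [AddCommMonoid M] (F : List ℕ → M) (n : ℕ) :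
    ∑ K : Composition (n + 1), F K.blocks =
      ∑ p ∈ antidiagonal n, ∑ L : Composition p.2, F ((p.1 + 1) :: L.blocks) := by
  rw [← (headTailEquiv n).symm.sum_comp, Fintype.sum_sigma]
  exact sum_coe_sort (antidiagonal n) fun p => ∑ L : Composition p.2, F ((p.1 + 1) :: L.blocks)

end Composition

section Semiring

variable (R : Type*) [CommSemiring R]

noncomputable def compositionSeries : PowerSeries R :=
  mk fun n => (Fintype.card (Composition n) : R)

noncomputable def partSumSeries (w : ℕ → R) : PowerSeries R :=
  mk fun n => ∑ K : Composition n, (K.blocks.map w).sum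

lemma compositionSeries_eq : compositionSeries R = 1 + X * mk 1 * compositionSeries R := by
  ext (_ | n)
  · simp [compositionSeries, composition_card]
  · rw [map_add, coeff_one, if_neg n.succ_ne_zero, zero_add, mul_assoc, coeff_succ_X_mul,
      coeff_mul]
    simpa [compositionSeries] using Composition.sum_blocks_succ (fun _ => (1 : R)) n

variable {R}

lemma partSumSeries_eq (w : ℕ → R) :
    partSumSeries R w =
      X * mk 1 * partSumSeries R w + X * mk (fun j => w (j + 1)) * compositionSeries R := by
  ext (_ | n)
  · simpa [partSumSeries] using
      sum_eq_zero fun (K : Composition 0) _ => by simp [K.blocks_eq_nil.2 rfl]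
  · rw [map_add, mul_assoc, mul_assoc, coeff_succ_X_mul, coeff_succ_X_mul, coeff_mul, coeff_mul,
      ← sum_add_distrib, partSumSeries, coeff_mk,
      Composition.sum_blocks_succ fun l => (l.map w).sum]
    refine sum_congr rfl fun p _ => ?_
    simp [sum_add_distrib, compositionSeries, add_comm, mul_comm]

end Semiring

section Ring

variable (R : Type*) [CommRing R]

lemma compositionSeries_mul_one_sub_two_X : compositionSeries R * (1 - 2 * X) = 1 - X := by
  linear_combination (1 - X) * compositionSeries_eq R +
    X * compositionSeries R * mk_one_mul_one_sub_eq_one R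

variable {R}

lemma partSumSeries_mul_one_sub_two_X_sq (w : ℕ → R) :
    partSumSeries R w * (1 - 2 * X) ^ 2 = X * mk (fun j => w (j + 1)) * (1 - X) ^ 2 := by
  linear_combination (1 - 2 * X) * (1 - X) * partSumSeries_eq w +
    X * partSumSeries R w * (1 - 2 * X) * mk_one_mul_one_sub_eq_one R +
    X * mk (fun j => w (j + 1)) * (1 - X) * compositionSeries_mul_one_sub_two_X R

end Ring

lemma List.count_eq_sum_map_ite {α S : Type*} [DecidableEq α] [Semiring S] (a : α) (l : List α) :
    (l.count a : S) = (l.map fun b => if b = a then 1 else 0).sum := by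
  induction l with
  | nil => simp
  | cons b l ih => by_cases h : b = a <;> simp [ih, h, add_comm]

/-- The generating function identity
`∑_{n≥0} c(n,i) x^n = x^i (1 - 2x + x^2)/(1 - 2x)^2` as formal power series. -/
theorem partCount_generating_function (i : ℕ) (hi : 1 ≤ i) :
    PowerSeries.mk (fun n => (partCount n i : ℚ)) =
      (X : PowerSeries ℚ) ^ i * (1 - 2 * X + X ^ 2) * ((1 - 2 * X) ^ 2)⁻¹ := by
  have h_partCount :
      PowerSeries.mk (fun n => (partCount n i : ℚ)) =
        partSumSeries ℚ fun j => if j = i then 1 else 0 := by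
    ext n
    simp [partCount, partSumSeries, List.count_eq_sum_map_ite]
  have h_weight : X * mk (fun j => if j + 1 = i then (1 : ℚ) else 0) = X ^ i := by
    obtain ⟨k, rfl⟩ := Nat.exists_eq_add_of_le' hi
    rw [pow_succ']
    congr 1
    ext j
    simp [coeff_X_pow]
  rw [eq_mul_inv_iff_mul_eq (by simp), h_partCount, partSumSeries_mul_one_sub_two_X_sq, h_weight]
  ring
end

section
/- For q a complex number and n >= 1, the product over all compositions I = (i_1,...,i_r) of n of prod_{k=1}^r (1 - q^{i_k}) equals (prod_{i=1}^{n-1} (1-q^i)^{(n-i+3)*2^{n-i-2}}) * (1-q^n). -/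
/-!
Splitting off the first block gives a recursion for the product, valid for any function `f` on
block sizes in place of `p ↦ 1 - q ^ p`. By it, the exponent `blockMultiplicity k` of `f j` in
the product over the compositions of `j + k` counts the `2 ^ (k - 1)` compositions whose first
block is `j` (the truncated `2 ^ (0 - 1) = 1` counts the empty rest correctly), plus, for each
first block `b ≤ k`, the exponent `blockMultiplicity (k - b)` contributed by the rest. This
recursion is solved by `blockMultiplicity 0 = 1` and `blockMultiplicity k = (k + 3) 2 ^ (k - 2)`
for `k ≥ 1`.
-/

open Finset

def blockMultiplicity : ℕ → ℕ
  | 0 => 1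
  | 1 => 2
  | k + 2 => 2 * blockMultiplicity (k + 1) + 2 ^ k

theorem blockMultiplicity_eq_two_pow_add_sum (k : ℕ) :
    blockMultiplicity k = 2 ^ (k - 1) + ∑ i ∈ range k, blockMultiplicity i := by
  induction k with
  | zero => rfl
  | succ k ih =>
    rcases k with _ | k
    · rfl
    · rw [sum_range_succ, blockMultiplicity]
      simp only [Nat.add_sub_cancel, pow_succ] at ih ⊢
      omega

theorem four_mul_blockMultiplicity {k : ℕ} (hk : 1 ≤ k) :
    4 * blockMultiplicity k = (k + 3) * 2 ^ k := by
  induction k, hk using Nat.le_induction with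
  | base => rfl
  | succ k hk ih =>
    obtain ⟨k, rfl⟩ := Nat.exists_eq_add_of_le' hk
    simp only [blockMultiplicity, pow_succ] at ih ⊢
    linarith

theorem blockMultiplicity_eq {k : ℕ} (hk : 1 ≤ k) :
    blockMultiplicity k = (k + 3) * 2 ^ k / 4 := by
  rw [← four_mul_blockMultiplicity hk, Nat.mul_div_cancel_left _ four_pos]

namespace Composition

def cons {n : ℕ} (k : Fin (n + 1)) (c : Composition (n - k)) : Composition (n + 1) where
  blocks := (k + 1) :: c.blocks
  blocks_pos := by simpa using fun _ => c.blocks_pos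
  blocks_sum := by simp only [List.sum_cons, c.blocks_sum]; omega

theorem cons_bijective (n : ℕ) :
    Function.Bijective fun x : Σ k : Fin (n + 1), Composition (n - k) => cons x.1 x.2 := by
  constructor
  · rintro ⟨k, c⟩ ⟨k', c'⟩ h
    obtain ⟨hk, hc⟩ : (k : ℕ) = k' ∧ c.blocks = c'.blocks := by simpa [cons] using h
    obtain rfl := Fin.ext hk
    rw [Composition.ext hc]
  · intro c
    have hsum := c.blocks_sum
    have hpos : ∀ {i}, i ∈ c.blocks → 0 < i := c.blocks_pos
    rcases hc : c.blocks with _ | ⟨_ | a, l⟩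
    · simp [hc] at hsum
    · simp [hc] at hpos
    · simp only [hc, List.sum_cons] at hsum
      rw [hc] at hpos
      refine ⟨⟨⟨a, by omega⟩, ⟨l, fun hi => hpos (List.mem_cons_of_mem _ hi), by dsimp only; omega⟩⟩, ?_⟩
      ext1
      simp [cons, hc]

variable {M : Type*} [CommMonoid M]

theorem prod_univ_prod_map_blocks_succ (f : ℕ → M) (n : ℕ) :
    ∏ c : Composition (n + 1), (c.blocks.map f).prod =
      ∏ k ∈ range (n + 1), f (k + 1) ^ 2 ^ (n - k - 1) *
        ∏ c : Composition (n - k), (c.blocks.map f).prod := by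
  rw [← (cons_bijective n).prod_comp, ← univ_sigma_univ, prod_sigma,
    ← Fin.prod_univ_eq_prod_range (fun k => f (k + 1) ^ 2 ^ (n - k - 1) *
        ∏ c : Composition (n - k), (c.blocks.map f).prod)]
  refine Fintype.prod_congr _ _ fun k => ?_
  simp only [cons, List.map_cons, List.prod_cons, prod_mul_distrib, prod_const, card_univ,
    composition_card]

theorem prod_univ_prod_map_blocks (f : ℕ → M) (n : ℕ) :
    ∏ c : Composition n, (c.blocks.map f).prod =
      ∏ j ∈ range n, f (j + 1) ^ blockMultiplicity (n - 1 - j) := by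
  induction n using Nat.strong_induction_on with
  | _ n ih =>
  rcases n with _ | n
  · refine prod_eq_one fun c _ => ?_
    rw [List.eq_nil_of_length_eq_zero (c.blocks_length.trans (Nat.le_zero.1 c.length_le))]
    rfl
  · rw [prod_univ_prod_map_blocks_succ, prod_congr rfl fun k hk => by rw [ih (n - k) (by omega)],
      prod_mul_distrib, prod_comm' (t' := range (n + 1)) (s' := fun j => range (n - j)) (by
        intro k j; simp only [mem_range]; omega), ← prod_mul_distrib]
    refine prod_congr rfl fun j hj => ?_
    rw [prod_pow_eq_pow_sum, ← pow_add, Nat.add_sub_cancel,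
      blockMultiplicity_eq_two_pow_add_sum (n - j), ← sum_range_reflect]
    exact congrArg (f (j + 1) ^ ·) (congrArg (2 ^ (n - j - 1) + ·)
      (sum_congr rfl fun i hi => congrArg blockMultiplicity (by rw [mem_range] at hi; omega)))

end Composition

/-- For a complex number `q` and `n ≥ 1`, the product over all compositions
`I = (i_1,…,i_r)` of `n` of `∏_k (1 - q^{i_k})` equals
`(∏_{i=1}^{n-1} (1-q^i)^{(n-i+3) 2^{n-i-2}}) (1-q^n)`.
(The exponent `(n-i+3) 2^{n-i-2}` is written as `(n-i+3) 2^{n-i} / 4`, which is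
the same integer; in particular for `i = n-1` it equals `4·2^{-1} = 2`.) -/
theorem det_theta_q (q : ℂ) (n : ℕ) (hn : 1 ≤ n) :
    (∏ I : Composition n, (I.blocks.map (fun p => 1 - q ^ p)).prod) =
      (∏ i ∈ Finset.Ico 1 n, (1 - q ^ i) ^ ((n - i + 3) * 2 ^ (n - i) / 4)) *
        (1 - q ^ n) := by
  obtain ⟨n, rfl⟩ := Nat.exists_eq_add_of_le' hn
  rw [Composition.prod_univ_prod_map_blocks, prod_range_succ, prod_Ico_eq_prod_range,
    Nat.add_sub_cancel, Nat.sub_self, blockMultiplicity, pow_one]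
  refine congrArg (· * _) (prod_congr rfl fun k hk => ?_)
  rw [mem_range] at hk
  rw [add_comm 1 k, Nat.add_sub_add_right, blockMultiplicity_eq (by omega)]
end

section
/- For every n >= 1 and N >= 1, the number of compositions of n all of whose parts are not divisible by N equals the number of compositions of n whose parts all lie in [1,N] and whose last part lies in [1,N-1]. -/
/-!
Split every part `p` of a composition greedily as `p = N + ⋯ + N + r` with `1 ≤ r ≤ N`. The
final piece `r` equals `N` exactly when `N ∣ p`, so on compositions with no part divisible by `N`
the splitting produces parts in `[1, N]` whose last part is below `N`, and every part of the
original composition can be recovered by absorbing each `N` into the part that follows it.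
Conversely, for a composition in `G` that absorption yields parts `r + kN` with `1 ≤ r < N`
(the last part is not `N`, so no run of `N`s is left over), and splitting them back is the
identity.
-/

open scoped Classical

namespace List

/-- The pieces `N, …, N, r` with `1 ≤ r ≤ N` of a positive `p`. -/
def splitPart (N p : ℕ) : List ℕ :=
  replicate ((p - 1) / N) N ++ [(p - 1) % N + 1]

def splitParts (N : ℕ) (l : List ℕ) : List ℕ :=
  l.flatMap (splitPart N)

/-- Absorbs every `N` into the next part; a trailing run of `N`s becomes a single part. -/
def mergeParts (N : ℕ) : List ℕ → List ℕ
  | [] => []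
  | x :: xs =>
    if x = N then ((mergeParts N xs).headD 0 + N) :: (mergeParts N xs).tail
    else x :: mergeParts N xs

variable {N : ℕ}

theorem splitPart_sum {p : ℕ} (hp : 0 < p) : (splitPart N p).sum = p := by
  have := Nat.mod_add_div' (p - 1) N
  simp only [splitPart, sum_append, sum_replicate, sum_singleton, smul_eq_mul]
  lia

theorem pos_of_mem_splitPart {p q : ℕ} (hq : q ∈ splitPart N p) : 0 < q := by
  simp only [splitPart, mem_append, mem_replicate, mem_singleton] at hq
  rcases hq with ⟨hcount, rfl⟩ | rfl
  · exact Nat.pos_of_ne_zero fun h => hcount (by simp [h])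
  · exact Nat.succ_pos _

theorem le_of_mem_splitPart (hN : 0 < N) {p q : ℕ} (hq : q ∈ splitPart N p) : q ≤ N := by
  simp only [splitPart, mem_append, mem_replicate, mem_singleton] at hq
  rcases hq with ⟨-, rfl⟩ | rfl
  · exact le_rfl
  · exact Nat.mod_lt _ hN

theorem splitPart_of_le {x : ℕ} (hx : 0 < x) (hxN : x ≤ N) : splitPart N x = [x] := by
  rw [splitPart, Nat.div_eq_of_lt (by lia), Nat.mod_eq_of_lt (by lia)]
  rw [replicate_zero, nil_append, Nat.sub_add_cancel hx]

theorem splitPart_add_self (hN : 0 < N) {p : ℕ} (hp : 0 < p) :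
    splitPart N (p + N) = N :: splitPart N p := by
  have h : p + N - 1 = p - 1 + N := by lia
  rw [splitPart, splitPart, h, Nat.add_div_right _ hN, Nat.add_mod_right, replicate_succ,
    cons_append]

theorem lastPiece_ne_of_not_dvd {p : ℕ} (h : ¬ N ∣ p) : (p - 1) % N + 1 ≠ N := by
  have hp : p ≠ 0 := by rintro rfl; exact h (dvd_zero N)
  intro hlast
  apply h
  refine ⟨1 + (p - 1) / N, ?_⟩
  have := Nat.mod_add_div' (p - 1) N
  rw [Nat.mul_add, Nat.mul_comm]
  lia

theorem splitParts_cons (p : ℕ) (l : List ℕ) :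
    splitParts N (p :: l) = splitPart N p ++ splitParts N l :=
  flatMap_cons

theorem splitParts_sum {l : List ℕ} (hl : ∀ p ∈ l, 0 < p) : (splitParts N l).sum = l.sum := by
  induction l with
  | nil => rfl
  | cons p l ih =>
    rw [splitParts_cons, sum_append, splitPart_sum (hl p mem_cons_self),
      ih fun q hq => hl q (mem_cons_of_mem p hq), sum_cons]

theorem pos_of_mem_splitParts {l : List ℕ} {q : ℕ} (hq : q ∈ splitParts N l) : 0 < q := by
  obtain ⟨p, -, hq⟩ := mem_flatMap.mp hq
  exact pos_of_mem_splitPart hq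

theorem le_of_mem_splitParts (hN : 0 < N) {l : List ℕ} {q : ℕ} (hq : q ∈ splitParts N l) :
    q ≤ N := by
  obtain ⟨p, -, hq⟩ := mem_flatMap.mp hq
  exact le_of_mem_splitPart hN hq

theorem getLast?_splitParts_ne {l : List ℕ} (hl : ∀ p ∈ l, ¬ N ∣ p) :
    (splitParts N l).getLast? ≠ some N := by
  rcases l.eq_nil_or_concat with rfl | ⟨L, p, rfl⟩
  · simp [splitParts]
  · have := lastPiece_ne_of_not_dvd (hl p (by simp))
    simpa [splitParts, splitPart] using this

theorem mergeParts_cons_self (xs : List ℕ) :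
    mergeParts N (N :: xs) = ((mergeParts N xs).headD 0 + N) :: (mergeParts N xs).tail := by
  rw [mergeParts, if_pos rfl]

theorem mergeParts_cons_of_ne {x : ℕ} (hx : x ≠ N) (xs : List ℕ) :
    mergeParts N (x :: xs) = x :: mergeParts N xs := by
  rw [mergeParts, if_neg hx]

theorem mergeParts_ne_nil {l : List ℕ} (hl : l ≠ []) : mergeParts N l ≠ [] := by
  obtain ⟨x, xs, rfl⟩ := ne_nil_iff_exists_cons.mp hl
  by_cases hx : x = N
  · subst hx; simp [mergeParts_cons_self]
  · simp [mergeParts_cons_of_ne hx]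

theorem mergeParts_sum (l : List ℕ) : (mergeParts N l).sum = l.sum := by
  induction l with
  | nil => rfl
  | cons x xs ih =>
    by_cases hx : x = N
    · subst hx
      rw [mergeParts_cons_self, sum_cons, sum_cons, ← ih]
      cases mergeParts x xs <;> simp only [headD_nil, tail_nil, sum_nil, headD_cons,
        tail_cons, sum_cons] <;> lia
    · rw [mergeParts_cons_of_ne hx, sum_cons, sum_cons, ih]

theorem pos_of_mem_mergeParts {l : List ℕ} (hl : ∀ x ∈ l, 0 < x) {q : ℕ}
    (hq : q ∈ mergeParts N l) : 0 < q := by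
  induction l with
  | nil => simp [mergeParts] at hq
  | cons x xs ih =>
    have ih := ih fun y hy => hl y (mem_cons_of_mem x hy)
    by_cases hx : x = N
    · subst hx
      rw [mergeParts_cons_self, mem_cons] at hq
      rcases hq with rfl | hq
      · have := hl x mem_cons_self; lia
      · exact ih (mem_of_mem_tail hq)
    · rw [mergeParts_cons_of_ne hx, mem_cons] at hq
      rcases hq with rfl | hq
      · exact hl q mem_cons_self
      · exact ih hq

theorem mergeParts_replicate_append {r : ℕ} (hr : r ≠ N) (q : ℕ) (l : List ℕ) :
    mergeParts N (replicate q N ++ r :: l) = (r + q * N) :: mergeParts N l := by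
  induction q with
  | zero => rw [replicate_zero, nil_append, mergeParts_cons_of_ne hr, zero_mul, add_zero]
  | succ q ih =>
    rw [replicate_succ, cons_append, mergeParts_cons_self, ih]
    simp only [headD_cons, tail_cons, add_mul, one_mul, add_assoc]

theorem mergeParts_splitParts {l : List ℕ} (hl : ∀ p ∈ l, ¬ N ∣ p) :
    mergeParts N (splitParts N l) = l := by
  induction l with
  | nil => rfl
  | cons p l ih =>
    have hp := hl p mem_cons_self
    have hp0 : p ≠ 0 := by rintro rfl; exact hp (dvd_zero N)
    rw [splitParts_cons, splitPart, append_assoc, singleton_append,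
      mergeParts_replicate_append (lastPiece_ne_of_not_dvd hp),
      ih fun q hq => hl q (mem_cons_of_mem p hq)]
    have := Nat.mod_add_div' (p - 1) N
    congr 1
    lia

theorem getLast?_ne_of_cons {x : ℕ} {xs : List ℕ} (h : (x :: xs).getLast? ≠ some N) :
    xs.getLast? ≠ some N := by
  intro hxs
  simp [getLast?_cons, hxs] at h

theorem splitParts_mergeParts {m : List ℕ} (hpos : ∀ x ∈ m, 0 < x) (hle : ∀ x ∈ m, x ≤ N)
    (hlast : m.getLast? ≠ some N) : splitParts N (mergeParts N m) = m := by
  induction m with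
  | nil => rfl
  | cons x xs ih =>
    have ih := ih (fun y hy => hpos y (mem_cons_of_mem x hy))
      (fun y hy => hle y (mem_cons_of_mem x hy)) (getLast?_ne_of_cons hlast)
    by_cases hx : x = N
    · subst hx
      have hxs : xs ≠ [] := by rintro rfl; exact hlast rfl
      obtain ⟨y, ys, hy⟩ := ne_nil_iff_exists_cons.mp (mergeParts_ne_nil (N := x) hxs)
      have hy0 : 0 < y := pos_of_mem_mergeParts (fun z hz => hpos z (mem_cons_of_mem x hz))
        (hy ▸ mem_cons_self)
      rw [mergeParts_cons_self, hy, headD_cons, tail_cons, splitParts_cons,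
        splitPart_add_self (hpos x mem_cons_self) hy0, cons_append, ← splitParts_cons, ← hy, ih]
    · rw [mergeParts_cons_of_ne hx, splitParts_cons,
        splitPart_of_le (hpos x mem_cons_self) (hle x mem_cons_self), ih, singleton_append]

theorem not_dvd_of_mem_mergeParts {m : List ℕ} (hpos : ∀ x ∈ m, 0 < x) (hle : ∀ x ∈ m, x ≤ N)
    (hlast : m.getLast? ≠ some N) : ∀ q ∈ mergeParts N m, ¬ N ∣ q := by
  induction m with
  | nil => simp [mergeParts]
  | cons x xs ih =>
    intro q hq
    have ih := ih (fun y hy => hpos y (mem_cons_of_mem x hy))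
      (fun y hy => hle y (mem_cons_of_mem x hy)) (getLast?_ne_of_cons hlast)
    by_cases hx : x = N
    · subst hx
      have hxs : xs ≠ [] := by rintro rfl; exact hlast rfl
      obtain ⟨y, ys, hy⟩ := ne_nil_iff_exists_cons.mp (mergeParts_ne_nil (N := x) hxs)
      rw [mergeParts_cons_self, hy, headD_cons, tail_cons, mem_cons] at hq
      rcases hq with rfl | hq
      · rw [Nat.dvd_add_self_right]
        exact ih y (hy ▸ mem_cons_self)
      · exact ih q (hy ▸ mem_cons_of_mem y hq)
    · rw [mergeParts_cons_of_ne hx, mem_cons] at hq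
      rcases hq with rfl | hq
      · exact Nat.not_dvd_of_pos_of_lt (hpos q mem_cons_self)
          (lt_of_le_of_ne (hle q mem_cons_self) hx)
      · exact ih q hq

end List

theorem List.forall_getLast?_le_pred_iff {N : ℕ} (hN : 1 ≤ N) {m : List ℕ}
    (hle : ∀ p ∈ m, p ≤ N) :
    (∀ p, m.getLast? = some p → p ≤ N - 1) ↔ m.getLast? ≠ some N := by
  refine ⟨fun h hN' => by have := h N hN'; lia, fun h p hp => ?_⟩
  have hpN : p ≠ N := by rintro rfl; exact h hp
  have := hle p (List.mem_of_getLast? hp)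
  lia

namespace Composition

variable {n : ℕ}

def splitParts (N : ℕ) (c : Composition n) : Composition n where
  blocks := c.blocks.splitParts N
  blocks_pos := List.pos_of_mem_splitParts
  blocks_sum := by rw [List.splitParts_sum fun _ => c.blocks_pos, c.blocks_sum]

def mergeParts (N : ℕ) (c : Composition n) : Composition n where
  blocks := c.blocks.mergeParts N
  blocks_pos := List.pos_of_mem_mergeParts fun _ => c.blocks_pos
  blocks_sum := by rw [List.mergeParts_sum, c.blocks_sum]

end Composition

theorem card_F_eq_card_G_general (n N : ℕ) (hN : 1 ≤ N) :
    ((Finset.univ : Finset (Composition n)).filter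
        (fun c => ∀ p ∈ c.blocks, ¬ N ∣ p)).card =
      ((Finset.univ : Finset (Composition n)).filter
        (fun c => (∀ p ∈ c.blocks, p ≤ N) ∧
          ∀ p, c.blocks.getLast? = some p → p ≤ N - 1)).card := by
  refine Finset.card_nbij' (Composition.splitParts N) (Composition.mergeParts N)
    ?_ ?_ ?_ ?_ <;> intro c hc <;>
    simp only [Finset.coe_filter, Finset.mem_univ, true_and, Set.mem_ofPred_eq] at hc ⊢
  · have hle : ∀ p ∈ (c.splitParts N).blocks, p ≤ N := fun _ => List.le_of_mem_splitParts hN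
    exact ⟨hle, (List.forall_getLast?_le_pred_iff hN hle).mpr (List.getLast?_splitParts_ne hc)⟩
  · exact List.not_dvd_of_mem_mergeParts (fun _ => c.blocks_pos) hc.1
      ((List.forall_getLast?_le_pred_iff hN hc.1).mp hc.2)
  · exact Composition.ext (List.mergeParts_splitParts hc)
  · exact Composition.ext (List.splitParts_mergeParts (fun _ => c.blocks_pos) hc.1
      ((List.forall_getLast?_le_pred_iff hN hc.1).mp hc.2))

/-- For `n ≥ 1` and `N ≥ 1`, the number of compositions of `n` with no part
divisible by `N` equals the number of compositions of `n` with all parts in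
`[1,N]` and last part in `[1,N-1]`. -/
theorem card_F_eq_card_G (n N : ℕ) (hn : 1 ≤ n) (hN : 1 ≤ N) :
    ((Finset.univ : Finset (Composition n)).filter
        (fun c => ∀ p ∈ c.blocks, ¬ N ∣ p)).card =
      ((Finset.univ : Finset (Composition n)).filter
        (fun c => (∀ p ∈ c.blocks, p ≤ N) ∧
          ∀ p, c.blocks.getLast? = some p → p ≤ N - 1)).card :=
  card_F_eq_card_G_general n N hN
end

section
/- The map sending (N*i_1 + j_1, ..., N*i_r + j_r) (with i_k >= 0 and j_k in [1,N-1]) to the composition obtained by replacing each part N*i_k + j_k with the block (N,N,...,N,j_k) consisting of i_k copies of N followed by j_k, is a bijection from the set of compositions of n with no part divisible by N onto the set of compositions of n with all parts in [1,N] and last part in [1,N-1]. -/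
/-- Replace a part `p = N·i + j` (with `j = p % N ∈ [1,N-1]`) by the block
`(N, …, N, j)` consisting of `i = p / N` copies of `N` followed by `j`. -/
def expandPart (N p : ℕ) : List ℕ := List.replicate (p / N) N ++ [p % N]

/-- Inverse map: merge maximal runs `(N,…,N,j)` back into a single part. -/
def contractL (N : ℕ) : List ℕ → List ℕ
  | [] => []
  | a :: l =>
    if a = N then
      match contractL N l with
      | [] => [N]
      | b :: t => (N + b) :: t
    else a :: contractL N l

lemma getLast?_cons_ne_nil {α : Type*} {a : α} {l : List α} (h : l ≠ []) :
    (a :: l).getLast? = l.getLast? := by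
  obtain ⟨b, t, rfl⟩ := List.exists_cons_of_ne_nil h
  simp

lemma sum_expandPart {N : ℕ} (hN : 0 < N) (p : ℕ) : (expandPart N p).sum = p := by
  simp only [expandPart, List.sum_append, List.sum_replicate, List.sum_cons,
    List.sum_nil, smul_eq_mul, Nat.add_zero]
  rw [Nat.mul_comm]
  exact Nat.div_add_mod p N

lemma contractL_replicate_append {N j : ℕ} (hj : j ≠ N) (i : ℕ) (rest : List ℕ) :
    contractL N (List.replicate i N ++ j :: rest) = (N * i + j) :: contractL N rest := by
  induction i with
  | zero => simp [contractL, hj]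
  | succ i ih =>
    rw [List.replicate_succ, List.cons_append, contractL, if_pos rfl, ih]
    ring_nf

lemma contractL_flatMap {N : ℕ} (hN : 0 < N) (l : List ℕ) :
    contractL N (l.flatMap (expandPart N)) = l := by
  induction l with
  | nil => simp [contractL]
  | cons p l ih =>
    rw [List.flatMap_cons, expandPart, List.append_assoc, List.singleton_append,
      contractL_replicate_append (Nat.ne_of_lt (Nat.mod_lt _ hN)), ih, Nat.div_add_mod]

lemma expandPart_add {N b : ℕ} (hN : 0 < N) : expandPart N (N + b) = N :: expandPart N b := by
  have h1 : (N + b) / N = b / N + 1 := by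
    rw [Nat.add_comm, Nat.add_div_right _ hN]
  have h2 : (N + b) % N = b % N := Nat.add_mod_left _ _
  simp [expandPart, h1, h2, List.replicate_succ]

lemma contract_spec {N : ℕ} (hN : 1 ≤ N) : ∀ l : List ℕ,
    (∀ p ∈ l, 0 < p ∧ p ≤ N) → (∀ p, l.getLast? = some p → p ≤ N - 1) →
    (contractL N l).flatMap (expandPart N) = l ∧
      ∀ p ∈ contractL N l, 0 < p ∧ ¬ N ∣ p := by
  intro l
  induction l with
  | nil => intro _ _; simp [contractL]
  | cons a l ih =>
    intro hparts hlast
    by_cases ha : a = N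
    · subst ha
      have hl : l ≠ [] := by
        intro h; subst h
        have := hlast a (by simp)
        omega
      have hih := ih (fun p hp => hparts p (List.mem_cons_of_mem _ hp))
        (fun p hp => hlast p (by rwa [getLast?_cons_ne_nil hl]))
      obtain ⟨hih1, hih2⟩ := hih
      have hcne : contractL a l ≠ [] := by
        intro h; rw [h] at hih1; simp at hih1; exact hl hih1
      obtain ⟨b, t, hbt⟩ := List.exists_cons_of_ne_nil hcne
      rw [hbt] at hih1 hih2
      have hcon : contractL a (a :: l) = (a + b) :: t := by
        rw [contractL, if_pos rfl, hbt]
      rw [hcon]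
      constructor
      · rw [List.flatMap_cons, expandPart_add hN, List.cons_append,
          ← List.flatMap_cons, hih1]
      · intro p hp
        rcases List.mem_cons.mp hp with h | h
        · subst h
          have hb := hih2 b (by simp)
          constructor
          · omega
          · intro hdvd
            exact hb.2 ((Nat.dvd_add_right ⟨1, (Nat.mul_one a).symm⟩).mp hdvd)
        · exact hih2 p (List.mem_cons_of_mem _ h)
    · have hih := ih (fun p hp => hparts p (List.mem_cons_of_mem _ hp))
        (by
          intro p hp
          rcases eq_or_ne l [] with h | h
          · subst h; simp at hp
          · exact hlast p (by rwa [getLast?_cons_ne_nil h]))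
      obtain ⟨hih1, hih2⟩ := hih
      have hcon : contractL N (a :: l) = a :: contractL N l := by
        rw [contractL, if_neg ha]
      have haN : a < N := lt_of_le_of_ne (hparts a (by simp)).2 ha
      have ha0 : 0 < a := (hparts a (by simp)).1
      rw [hcon]
      constructor
      · rw [List.flatMap_cons, expandPart, Nat.div_eq_of_lt haN, Nat.mod_eq_of_lt haN,
          List.replicate_zero, List.nil_append, List.singleton_append, hih1]
      · intro p hp
        rcases List.mem_cons.mp hp with h | h
        · subst h
          exact ⟨ha0, fun hdvd => absurd (Nat.le_of_dvd ha0 hdvd) (by omega)⟩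
        · exact hih2 p h

lemma getLast_flatMap {N : ℕ} (hN : 0 < N) : ∀ l : List ℕ,
    (∀ p ∈ l, 0 < p ∧ ¬ N ∣ p) → ∀ q, (l.flatMap (expandPart N)).getLast? = some q →
    q ≤ N - 1 := by
  intro l
  induction l with
  | nil => intro _ q hq; simp at hq
  | cons p l ih =>
    intro hparts q hq
    rcases eq_or_ne l [] with h | h
    · subst h
      simp only [List.flatMap_cons, List.flatMap_nil, List.append_nil, expandPart] at hq
      rw [List.getLast?_concat, Option.some_inj] at hq
      have hp' := hparts p (by simp)
      have : p % N < N := Nat.mod_lt _ hN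
      omega
    · have hne : l.flatMap (expandPart N) ≠ [] := by
        obtain ⟨b, t, rfl⟩ := List.exists_cons_of_ne_nil h
        simp only [List.flatMap_cons, expandPart]
        intro hc
        simpa using congrArg List.length hc
      rw [List.flatMap_cons, List.getLast?_append_of_ne_nil _ hne] at hq
      exact ih (fun p hp => hparts p (List.mem_cons_of_mem _ hp)) q hq

lemma sum_flatMap_expandPart {N : ℕ} (hN : 0 < N) (l : List ℕ) :
    (l.flatMap (expandPart N)).sum = l.sum := by
  induction l with
  | nil => simp
  | cons p l ih => rw [List.flatMap_cons, List.sum_append, ih, sum_expandPart hN, List.sum_cons]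

/-- The map replacing each part `N·i_k + j_k` by the block `(N^{i_k}, j_k)` is a
bijection from the set of compositions of `n` with no part divisible by `N`
onto the set of compositions of `n` with all parts in `[1,N]` and last part in
`[1,N-1]` (compositions being represented as lists of positive integers summing
to `n`). -/
theorem expand_bijOn (n N : ℕ) (hN : 1 ≤ N) :
    Set.BijOn (fun l : List ℕ => l.flatMap (expandPart N))
      {l : List ℕ | l.sum = n ∧ ∀ p ∈ l, 0 < p ∧ ¬ N ∣ p}
      {l : List ℕ | l.sum = n ∧ (∀ p ∈ l, 0 < p ∧ p ≤ N) ∧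
        ∀ p, l.getLast? = some p → p ≤ N - 1} := by
  have hN0 : 0 < N := hN
  refine ⟨?_, ?_, ?_⟩
  · -- MapsTo
    rintro l ⟨hsum, hparts⟩
    refine ⟨by rw [sum_flatMap_expandPart hN0]; exact hsum, ?_, ?_⟩
    · intro q hq
      obtain ⟨p, hp, hq⟩ := List.mem_flatMap.mp hq
      have hp' := hparts p hp
      have hmod : 0 < p % N := Nat.pos_of_ne_zero (fun h => hp'.2 (Nat.dvd_of_mod_eq_zero h))
      rcases List.mem_append.mp hq with h | h
      · rw [List.eq_of_mem_replicate h]; exact ⟨hN0, le_refl N⟩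
      · rw [List.mem_singleton.mp h]
        exact ⟨hmod, Nat.le_of_lt (Nat.mod_lt _ hN0)⟩
    · exact fun q hq => getLast_flatMap hN0 l hparts q hq
  · -- InjOn
    intro l₁ _ l₂ _ heq
    have := congrArg (contractL N) heq
    rwa [contractL_flatMap hN0, contractL_flatMap hN0] at this
  · -- SurjOn
    rintro m ⟨hsum, hparts, hlast⟩
    obtain ⟨h1, h2⟩ := contract_spec hN m hparts hlast
    refine ⟨contractL N m, ⟨?_, h2⟩, h1⟩
    rw [← sum_flatMap_expandPart hN0 (contractL N m), h1, hsum]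
end

section
/- In the algebra of noncommutative symmetric functions, for any two compositions I and J, the product (sum over K ≤_{P} I of R_K) times (sum over L ≤_{P} J of R_L) equals sum over M ≤_{P} I.J of R_M, where ≤_{P} denotes the N-th order peak order on compositions. In other words, Sigma_I^{(N)} * Sigma_J^{(N)} = Sigma_{I.J}^{(N)}. -/
open scoped Classical

noncomputable section

/-- The algebra of noncommutative symmetric functions, realized as the free
associative algebra over `ℂ` on generators `S_1, S_2, …` (indexed by `ℕ`,
the index `0` being unused). -/
abbrev NSym : Type := FreeAlgebra ℂ ℕ

/-- The complete noncommutative symmetric function `S_n`, with `S_0 = 1`. -/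
def Sg (n : ℕ) : NSym := if n = 0 then 1 else FreeAlgebra.ι ℂ n

/-- `S^I = S_{i_1} ⋯ S_{i_r}` for a composition `I` (a list of parts). -/
def SWord (I : List ℕ) : NSym := (I.map Sg).prod

/-- The list of all coarsenings of a composition (obtained by merging
adjacent blocks). -/
def coarse : List ℕ → List (List ℕ)
  | [] => [[]]
  | [a] => [[a]]
  | a :: b :: l => ((coarse (b :: l)).map (fun K => a :: K)) ++ coarse ((a + b) :: l)
termination_by l => l.length
decreasing_by all_goals simp

/-- The noncommutative ribbon Schur function
`R_I = ∑_{J ⪯ I} (-1)^{ℓ(I) - ℓ(J)} S^J`, the sum ranging over all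
coarsenings `J` of `I`. -/
def Rib (I : List ℕ) : NSym :=
  ((coarse I).map (fun J => ((-1 : ℂ) ^ (I.length - J.length)) • SWord J)).sum

/-- One elementary step of the order `≤_{P^{(N)}}`: replace one part `m + k`
by the pair `(m, k)` with `m ∈ [1, N-1]` and `k ≥ 1`. -/
def splitStep (N : ℕ) (I J : List ℕ) : Prop :=
  ∃ (L R : List ℕ) (m k : ℕ), 1 ≤ m ∧ m ≤ N - 1 ∧ 1 ≤ k ∧
    I = L ++ (m + k) :: R ∧ J = L ++ m :: k :: R

/-- `peakLE N J I` means `J ≤_{P^{(N)}} I`, i.e. `I` can be obtained from `J`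
by successively splitting parts `i` into `(m, i - m)` with `m ∈ [1, N-1]`. -/
def peakLE (N : ℕ) (J I : List ℕ) : Prop :=
  Relation.ReflTransGen (splitStep N) J I

/-- The complete peak function of order `N`:
`Σ^{(N)}_I = ∑_{J ≤_{P^{(N)}} I} R_J`. (Every `J ≤_{P^{(N)}} I` is a
coarsening of `I`, so the sum may be taken over coarsenings of `I`.) -/
def SigmaP (N : ℕ) (I : List ℕ) : NSym :=
  ((coarse I).map (fun J => if peakLE N J I then Rib J else 0)).sum

/-- Membership in `G^{(N)}`: all parts lie in `[1, N]` and the last part lies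
in `[1, N-1]`. -/
def memG (N : ℕ) (I : List ℕ) : Prop :=
  (∀ p ∈ I, 1 ≤ p ∧ p ≤ N) ∧ (∀ p, I.getLast? = some p → p ≤ N - 1)

end

/-! Write `c ⊕ K` (`addHead c K`) for `K` with `c` added to its first part, and
`G_c(M) = ∑_{K ≤ M} R_{c ⊕ K}`, so that `G_0 = Σ`. The lower set of `a · M` in the peak order
consists of the `a · K` with `K ≤ M`, together with the `a ⊕ K` when `a ≤ N - 1`; combined with the
ribbon recursion `R_{a · K} = S_a R_K - R_{a ⊕ K}` this gives
`G_c(a · M) = S_{c+a} Σ_M - [a ≥ N] G_{c+a}(M)`.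
The right-hand side only involves the first part of `a · M`, so induction on `I` yields
`G_c(I · J) = G_c(I) Σ_J` once the last part of `I` is at most `N - 1`, where the recursion stops
with `G_c(a · J) = S_{c+a} Σ_J`. -/

def addHead (a : ℕ) : List ℕ → List ℕ
  | [] => [a]
  | x :: X => (a + x) :: X

@[simp] lemma addHead_nil (a : ℕ) : addHead a [] = [a] := rfl

@[simp] lemma addHead_cons (a x : ℕ) (X : List ℕ) : addHead a (x :: X) = (a + x) :: X := rfl

lemma addHead_addHead (a b : ℕ) (K : List ℕ) : addHead a (addHead b K) = addHead (a + b) K := by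
  cases K <;> simp [Nat.add_assoc]

lemma length_addHead_of_ne_nil (a : ℕ) {K : List ℕ} (hK : K ≠ []) :
    (addHead a K).length = K.length := by
  obtain ⟨x, X, rfl⟩ := List.exists_cons_of_ne_nil hK
  rfl

lemma coarse_addHead (a : ℕ) (M : List ℕ) : coarse (addHead a M) = (coarse M).map (addHead a) := by
  induction M using coarse.induct generalizing a with
  | case1 => simp [coarse]
  | case2 b => simp [coarse]
  | case3 b c l ih₁ ih₂ =>
    rw [addHead_cons, coarse, coarse, List.map_append, List.map_map, ← ih₂, addHead_cons,
      Nat.add_assoc]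
    rfl

lemma coarse_cons (a : ℕ) {M : List ℕ} (hM : M ≠ []) :
    coarse (a :: M) = (coarse M).map (a :: ·) ++ (coarse M).map (addHead a) := by
  obtain ⟨b, l, rfl⟩ := List.exists_cons_of_ne_nil hM
  rw [coarse, ← addHead_cons, coarse_addHead]

lemma length_le_of_mem_coarse {M K : List ℕ} (hK : K ∈ coarse M) : K.length ≤ M.length := by
  induction M using coarse.induct generalizing K with
  | case1 | case2 => simp_all [coarse]
  | case3 a b l ih₁ ih₂ =>
    rw [coarse, List.mem_append, List.mem_map] at hK
    rcases hK with ⟨K', hK', rfl⟩ | hK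
    · simpa using ih₁ hK'
    · simpa using (ih₂ hK).trans (Nat.le_succ _)

lemma ne_nil_of_mem_coarse {M K : List ℕ} (hK : K ∈ coarse M) (hM : M ≠ []) : K ≠ [] := by
  induction M using coarse.induct generalizing K with
  | case1 | case2 => simp_all [coarse]
  | case3 a b l ih₁ ih₂ =>
    rw [coarse, List.mem_append, List.mem_map] at hK
    rcases hK with ⟨K', -, rfl⟩ | hK
    · simp
    · exact ih₂ hK (List.cons_ne_nil _ _)

lemma zero_notMem_of_mem_coarse {M K : List ℕ} (hK : K ∈ coarse M) (hM : 0 ∉ M) : 0 ∉ K := by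
  induction M using coarse.induct generalizing K with
  | case1 | case2 => simp_all [coarse]
  | case3 a b l ih₁ ih₂ =>
    simp only [List.mem_cons, not_or] at hM ih₁ ih₂ ⊢
    obtain ⟨ha, hb, hl⟩ := hM
    rw [coarse, List.mem_append, List.mem_map] at hK
    rcases hK with ⟨K', hK', rfl⟩ | hK
    · simpa [ha] using ih₁ hK' ⟨hb, hl⟩
    · exact ih₂ hK ⟨by omega, hl⟩

lemma peakLE_cons (N a : ℕ) {X Y : List ℕ} (h : peakLE N X Y) : peakLE N (a :: X) (a :: Y) := by
  refine Relation.ReflTransGen.lift (a :: ·) (fun _ _ hstep => ?_) X Y h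
  obtain ⟨L, R, m, k, hm, hmN, hk, rfl, rfl⟩ := hstep
  exact ⟨a :: L, R, m, k, hm, hmN, hk, rfl, rfl⟩

-- `peakLE` described part by part, which makes it easy to invert on the first parts.
inductive PeakRefines (N : ℕ) : List ℕ → List ℕ → Prop
  | nil : PeakRefines N [] []
  | cons (x : ℕ) {X Y : List ℕ} : PeakRefines N X Y → PeakRefines N (x :: X) (x :: Y)
  | split {m k : ℕ} {X Y : List ℕ} : 1 ≤ m → m ≤ N - 1 → 1 ≤ k →
      PeakRefines N (k :: X) Y → PeakRefines N ((m + k) :: X) (m :: Y)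

namespace PeakRefines

variable {N : ℕ}

lemma refl : ∀ X : List ℕ, PeakRefines N X X
  | [] => nil
  | x :: X => cons x (refl X)

lemma cons_cons_iff {x y : ℕ} {X Y : List ℕ} :
    PeakRefines N (x :: X) (y :: Y) ↔ (x = y ∧ PeakRefines N X Y) ∨
      ∃ k, 1 ≤ y ∧ y ≤ N - 1 ∧ 1 ≤ k ∧ x = y + k ∧ PeakRefines N (k :: X) Y := by
  constructor
  · rintro (_ | ⟨_, h⟩ | ⟨hm, hmN, hk, h⟩)
    · exact .inl ⟨rfl, h⟩
    · exact .inr ⟨_, hm, hmN, hk, rfl, h⟩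
  · rintro (⟨rfl, h⟩ | ⟨k, hm, hmN, hk, rfl, h⟩)
    · exact cons x h
    · exact split hm hmN hk h

lemma split_finer {m k : ℕ} (hm : 1 ≤ m) (hmN : m ≤ N - 1) (hk : 1 ≤ k) :
    ∀ {L R X : List ℕ}, PeakRefines N X (L ++ (m + k) :: R) →
      PeakRefines N X (L ++ m :: k :: R)
  | [], R, _, cons _ h => split hm hmN hk (cons k h)
  | [], R, _, split (k := k') hm' hmN' hk' h => by
    rw [Nat.add_assoc]
    exact split hm hmN (by omega) (split hk (by omega) hk' h)
  | y :: L, R, _, cons _ h => cons y (split_finer hm hmN hk h)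
  | y :: L, R, _, split hm' hmN' hk' h => split hm' hmN' hk' (split_finer hm hmN hk h)

lemma of_peakLE {X Y : List ℕ} (h : peakLE N X Y) : PeakRefines N X Y := by
  induction h with
  | refl => exact refl X
  | tail _ hstep ih =>
    obtain ⟨L, R, m, k, hm, hmN, hk, rfl, rfl⟩ := hstep
    exact split_finer hm hmN hk ih

end PeakRefines

lemma PeakRefines.peakLE {N : ℕ} {X Y : List ℕ} (h : PeakRefines N X Y) : peakLE N X Y := by
  induction h with
  | nil => exact .refl
  | cons x _ ih => exact peakLE_cons N x ih
  | split hm hmN hk _ ih =>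
    exact .head ⟨[], _, _, _, hm, hmN, hk, rfl, rfl⟩ (peakLE_cons N _ ih)

lemma peakLE_iff_peakRefines {N : ℕ} {X Y : List ℕ} : peakLE N X Y ↔ PeakRefines N X Y :=
  ⟨PeakRefines.of_peakLE, PeakRefines.peakLE⟩

lemma peakLE_cons_cons_iff {N a : ℕ} {K M : List ℕ} :
    peakLE N (a :: K) (a :: M) ↔ peakLE N K M := by
  simp only [peakLE_iff_peakRefines, PeakRefines.cons_cons_iff, true_and]
  refine ⟨?_, .inl⟩
  rintro (h | ⟨k, -, -, hk, hak, -⟩)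
  · exact h
  · omega

lemma peakLE_add_cons_iff {N a k : ℕ} {K M : List ℕ} (ha : 1 ≤ a) (hk : 1 ≤ k) :
    peakLE N ((a + k) :: K) (a :: M) ↔ a ≤ N - 1 ∧ peakLE N (k :: K) M := by
  simp only [peakLE_iff_peakRefines, PeakRefines.cons_cons_iff]
  constructor
  · rintro (⟨hak, -⟩ | ⟨k', -, haN, -, hkk, h⟩)
    · omega
    · obtain rfl : k = k' := by omega
      exact ⟨haN, h⟩
  · rintro ⟨haN, h⟩
    exact .inr ⟨k, ha, haN, hk, rfl, h⟩

section PeakSum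

variable {A : Type*} (N : ℕ)

noncomputable def peakSum [AddCommMonoid A] (M : List ℕ) (F : List ℕ → A) : A :=
  ((coarse M).map (fun K => if peakLE N K M then F K else 0)).sum

lemma peakSum_nil [AddCommMonoid A] (F : List ℕ → A) : peakSum N [] F = F [] := by
  simp [peakSum, coarse, PeakRefines.nil.peakLE]

lemma peakSum_singleton [AddCommMonoid A] (a : ℕ) (F : List ℕ → A) : peakSum N [a] F = F [a] := by
  simp [peakSum, coarse, (PeakRefines.refl [a]).peakLE]

lemma peakSum_congr [AddCommMonoid A] {M : List ℕ} {F G : List ℕ → A}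
    (h : ∀ K ∈ coarse M, F K = G K) : peakSum N M F = peakSum N M G := by
  unfold peakSum
  congr 1
  refine List.map_congr_left fun K hK => ?_
  rw [h K hK]

lemma peakSum_sub [AddCommGroup A] (M : List ℕ) (F G : List ℕ → A) :
    peakSum N M (fun K => F K - G K) = peakSum N M F - peakSum N M G := by
  rw [eq_sub_iff_add_eq, peakSum, peakSum, peakSum, ← List.sum_map_add]
  congr 1
  refine List.map_congr_left fun K _ => ?_
  split_ifs <;> simp

lemma peakSum_mul_left [NonUnitalNonAssocSemiring A] (M : List ℕ) (x : A) (F : List ℕ → A) :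
    peakSum N M (fun K => x * F K) = x * peakSum N M F := by
  simp only [peakSum, ← List.sum_map_mul_left, mul_ite, mul_zero]

lemma peakSum_cons [AddCommMonoid A] {a : ℕ} (ha : 1 ≤ a) {M : List ℕ} (hM : M ≠ []) (hM₀ : 0 ∉ M)
    (F : List ℕ → A) :
    peakSum N (a :: M) F = peakSum N M (fun K => F (a :: K)) +
      if a ≤ N - 1 then peakSum N M (fun K => F (addHead a K)) else 0 := by
  have hsplit : ∀ K ∈ coarse M, peakLE N (addHead a K) (a :: M) ↔ a ≤ N - 1 ∧ peakLE N K M := by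
    intro K hK
    obtain ⟨k, K', rfl⟩ := List.exists_cons_of_ne_nil (ne_nil_of_mem_coarse hK hM)
    have hk : 1 ≤ k :=
      Nat.pos_of_ne_zero fun h => zero_notMem_of_mem_coarse hK hM₀ (by simp [h])
    exact peakLE_add_cons_iff ha hk
  rw [peakSum, coarse_cons a hM, List.map_append, List.sum_append, List.map_map, List.map_map]
  congr 1
  · simp only [peakSum, Function.comp_def, peakLE_cons_cons_iff]
  · split_ifs with haN
    · refine congrArg List.sum (List.map_congr_left fun K hK => ?_)
      simp only [Function.comp_apply, hsplit K hK, haN, true_and]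
    · refine List.sum_eq_zero fun x hx => ?_
      obtain ⟨K, hK, rfl⟩ := List.mem_map.1 hx
      simp [hsplit K hK, haN]

end PeakSum

lemma SWord_cons (a : ℕ) (K : List ℕ) : SWord (a :: K) = Sg a * SWord K := by
  simp [SWord]

lemma Rib_nil : Rib [] = 1 := by
  simp [Rib, coarse, SWord]

lemma Rib_singleton (a : ℕ) : Rib [a] = Sg a := by
  simp [Rib, coarse, SWord]

lemma Rib_addHead_zero (K : List ℕ) : Rib (addHead 0 K) = Rib K := by
  cases K with
  | nil => simp [Rib_singleton, Rib_nil, Sg]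
  | cons x X => simp

lemma Rib_cons (a : ℕ) {M : List ℕ} (hM : M ≠ []) :
    Rib (a :: M) = Sg a * Rib M - Rib (addHead a M) := by
  rw [Rib, coarse_cons a hM, ← coarse_addHead, List.map_append, List.sum_append, List.map_map,
    sub_eq_add_neg]
  congr 1
  · rw [Rib, ← List.sum_map_mul_left]
    refine congrArg List.sum (List.map_congr_left fun K _ => ?_)
    simp only [Function.comp_apply, List.length_cons, Nat.add_sub_add_right, SWord_cons,
      mul_smul_comm]
  · rw [Rib, List.sum_neg, List.map_map, length_addHead_of_ne_nil a hM]
    refine congrArg List.sum (List.map_congr_left fun K hK => ?_)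
    have hK : K.length ≤ M.length := length_addHead_of_ne_nil a hM ▸ length_le_of_mem_coarse hK
    simp only [Function.comp_apply, List.length_cons, Nat.sub_add_comm hK, pow_succ, mul_neg_one,
      neg_smul]

section Shifted

variable (N : ℕ)

noncomputable def shiftedSigmaP (c : ℕ) (M : List ℕ) : NSym :=
  peakSum N M (fun K => Rib (addHead c K))

lemma SigmaP_eq_peakSum (M : List ℕ) : SigmaP N M = peakSum N M Rib := rfl

lemma SigmaP_nil : SigmaP N [] = 1 := by
  rw [SigmaP_eq_peakSum, peakSum_nil, Rib_nil]

lemma shiftedSigmaP_zero (M : List ℕ) : shiftedSigmaP N 0 M = SigmaP N M := by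
  rw [shiftedSigmaP, SigmaP_eq_peakSum]
  exact peakSum_congr N fun K _ => Rib_addHead_zero K

lemma shiftedSigmaP_singleton (c a : ℕ) : shiftedSigmaP N c [a] = Sg (c + a) := by
  rw [shiftedSigmaP, peakSum_singleton, addHead_cons, Rib_singleton]

lemma shiftedSigmaP_cons (c : ℕ) {a : ℕ} (ha : 1 ≤ a) {M : List ℕ} (hM : M ≠ []) (hM₀ : 0 ∉ M) :
    shiftedSigmaP N c (a :: M) =
      Sg (c + a) * SigmaP N M - if a ≤ N - 1 then 0 else shiftedSigmaP N (c + a) M := by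
  have hRib : ∀ K ∈ coarse M,
      Rib (addHead c (a :: K)) = Sg (c + a) * Rib K - Rib (addHead (c + a) K) :=
    fun K hK => Rib_cons (c + a) (ne_nil_of_mem_coarse hK hM)
  rw [shiftedSigmaP, peakSum_cons N ha hM hM₀, peakSum_congr N hRib, peakSum_sub, peakSum_mul_left,
    ← SigmaP_eq_peakSum]
  simp only [addHead_addHead]
  rw [← shiftedSigmaP]
  split_ifs <;> abel

lemma shiftedSigmaP_append {J : List ℕ} (hJ : J ≠ []) (hJ₀ : 0 ∉ J) (c : ℕ) {I : List ℕ}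
    (hI : I ≠ []) (hI₀ : 0 ∉ I) (hlast : ∀ p, I.getLast? = some p → p ≤ N - 1) :
    shiftedSigmaP N c (I ++ J) = shiftedSigmaP N c I * SigmaP N J := by
  induction I generalizing c with
  | nil => exact absurd rfl hI
  | cons a I ih =>
    have ha : 1 ≤ a := Nat.pos_of_ne_zero fun h => hI₀ (by simp [h])
    have hI₀' : 0 ∉ I := fun h => hI₀ (List.mem_cons_of_mem a h)
    rcases eq_or_ne I [] with rfl | hI'
    · have haN : a ≤ N - 1 := hlast a rfl
      rw [List.singleton_append, shiftedSigmaP_cons N c ha hJ hJ₀, if_pos haN, sub_zero,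
        shiftedSigmaP_singleton]
    · have hlast' : ∀ p, I.getLast? = some p → p ≤ N - 1 := by
        obtain ⟨b, I, rfl⟩ := List.exists_cons_of_ne_nil hI'
        simpa only [List.getLast?_cons_cons] using hlast
      have hIJ : I ++ J ≠ [] := by simp [hI']
      have hIJ₀ : 0 ∉ I ++ J := by simp [hI₀', hJ₀]
      rw [List.cons_append, shiftedSigmaP_cons N c ha hIJ hIJ₀, ← shiftedSigmaP_zero,
        ih 0 hI' hI₀' hlast', ih (c + a) hI' hI₀' hlast', shiftedSigmaP_zero,
        shiftedSigmaP_cons N c ha hI' hI₀']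
      split_ifs <;> simp [sub_mul, mul_assoc]

end Shifted

theorem sigmaP_mul_general (N : ℕ) (I J : List ℕ)
    (hI : memG N I) (hJ : memG N J) :
    SigmaP N I * SigmaP N J = SigmaP N (I ++ J) := by
  rcases eq_or_ne I [] with rfl | hI0
  · rw [SigmaP_nil, one_mul, List.nil_append]
  rcases eq_or_ne J [] with rfl | hJ0
  · rw [SigmaP_nil, mul_one, List.append_nil]
  have hpos : ∀ {K : List ℕ}, memG N K → 0 ∉ K := fun hK h => absurd (hK.1 0 h).1 (by omega)
  rw [← shiftedSigmaP_zero N (I ++ J), shiftedSigmaP_append N hJ0 (hpos hJ) 0 hI0 (hpos hI) hI.2,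
    shiftedSigmaP_zero]

/-- Multiplicativity of the complete peak functions of order `N`:
`Σ^{(N)}_I Σ^{(N)}_J = Σ^{(N)}_{I·J}` for compositions `I, J ∈ G^{(N)}`. -/
theorem sigmaP_mul (N : ℕ) (hN : 1 ≤ N) (I J : List ℕ)
    (hI : memG N I) (hJ : memG N J) :
    SigmaP N I * SigmaP N J = SigmaP N (I ++ J) :=
  sigmaP_mul_general N I J hI hJ
end
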